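/- arXiv:2303.02185 — 2 statements merged into one kernel-verified Lean document; each statement's English description precedes it below -/
import Mathlib

section
/- Suppose along a trajectory ẋ = f(x), the invariance condition (∇P(y))ᵀ f(y) < 0 holds for all y with P(y) = 0, f is homogeneous of degree zero (f(λy) = λ f(y)), and (∇P(y))ᵀ y > 0 for all y ≠ 0 with P(y) = 0. If x(t) solves ẋ = f(x) with x(t) ≠ 0 and c(t) := τ(x(t)) is differentiable with c > 0 and P(x/c) ≡ 0, then ċ(t) < 0 for all t. Hence τ is strictly decreasing along trajectories. -/
/-!
Write `y = c⁻¹ • x` for the rescaled point on `{P = 0}`. Differentiating `P (c⁻¹ • x) = 0`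
and using `x = c • y` together with the homogeneity `f (c • y) = c • f y` gives
`P'(y) (f y) = (ċ / c) · P'(y) y`. The left side is negative by the crossing condition and
`P'(y) y` is positive, so `ċ / c < 0`, i.e. `ċ < 0`.
-/

theorem HasFDerivAt.apply_velocity_of_rescaled_level_curve {E : Type*}
    [NormedAddCommGroup E] [NormedSpace ℝ E] {P : E → ℝ} {P' : E →L[ℝ] ℝ} {x : ℝ → E}
    {v : E} {c : ℝ → ℝ} {d a t : ℝ} (hP : HasFDerivAt P P' ((c t)⁻¹ • x t))
    (hx : HasDerivAt x v t) (hc : HasDerivAt c d t) (hct : c t ≠ 0)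
    (hlevel : ∀ s, P ((c s)⁻¹ • x s) = a) :
    P' ((c t)⁻¹ • v) = d / c t * P' ((c t)⁻¹ • x t) := by
  have hcurve : HasDerivAt (fun s => (c s)⁻¹ • x s)
      ((c t)⁻¹ • v + (-d / c t ^ 2) • x t) t :=
    (hc.inv hct).smul hx
  have hzero : P' ((c t)⁻¹ • v + (-d / c t ^ 2) • x t) = 0 :=
    (hP.comp_hasDerivAt t hcurve).unique <| by
      simpa only [Function.comp_def, hlevel] using hasDerivAt_const t a
  simp only [map_add, map_smul, smul_eq_mul] at hzero ⊢
  field_simp at hzero ⊢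
  linarith

/-- Under the strict inward-crossing condition on `{P = 0}`, positive
homogeneity of `f`, and Euler-type positivity `(∇P(y))ᵀ y > 0` on `{P = 0} \ {0}`,
the function `c(t) = τ(x(t))` satisfies `ċ(t) < 0` along trajectories of `ẋ = f(x)`. -/
theorem algebraic_lyapunov_decreasing_along_trajectories
    (n : ℕ) (f : (Fin n → ℝ) → (Fin n → ℝ))
    (hf : ∀ (l : ℝ), 0 < l → ∀ y, f (l • y) = l • f y)
    (P : (Fin n → ℝ) → ℝ) (hP : Differentiable ℝ P)
    (hinv : ∀ y : Fin n → ℝ, y ≠ 0 → P y = 0 → fderiv ℝ P y (f y) < 0)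
    (heuler : ∀ y : Fin n → ℝ, y ≠ 0 → P y = 0 → 0 < fderiv ℝ P y y)
    (x : ℝ → (Fin n → ℝ)) (hx : Differentiable ℝ x)
    (hode : ∀ t, deriv x t = f (x t)) (hxne : ∀ t, x t ≠ 0)
    (c : ℝ → ℝ) (hc : Differentiable ℝ c) (hcpos : ∀ t, 0 < c t)
    (hzero : ∀ t, P ((c t)⁻¹ • x t) = 0) :
    ∀ t : ℝ, deriv c t < 0 := by
  intro t
  set y := (c t)⁻¹ • x t
  have hy : y ≠ 0 := smul_ne_zero (inv_ne_zero (hcpos t).ne') (hxne t)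
  have hx' : HasDerivAt x (f (x t)) t := hode t ▸ (hx t).hasDerivAt
  have key := (hP y).hasFDerivAt.apply_velocity_of_rescaled_level_curve hx'
    (hc t).hasDerivAt (hcpos t).ne' hzero
  rw [← hf _ (inv_pos.2 (hcpos t))] at key
  have hratio : deriv c t / c t < 0 :=
    neg_of_mul_neg_left (key ▸ hinv y hy (hzero t)) (heuler y hy (hzero t)).le
  exact neg_of_div_neg_left hratio (hcpos t).le
end

section
/- The function V(x₁,x₂) = (x₂ − x₁ + √((x₂−x₁)² + 2(x₁²+x₂²)))/2 satisfies: V(x) > 0 for all x ≠ 0, V(0) = 0, and V is positively homogeneous of degree 1. -/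
/-! The radicand exceeds `(x₁ - x₂)²` by `2 (x₁² + x₂²)`, so off the origin its square root
beats `x₁ - x₂`; and the radicand is homogeneous of degree 2, so its root is of degree 1. -/

lemma sq_add_sq_pos_of_ne_zero {R : Type*} [Ring R] [LinearOrder R] [IsStrictOrderedRing R]
    {x y : R} (h : (x, y) ≠ (0, 0)) : 0 < x ^ 2 + y ^ 2 := by
  refine lt_of_le_of_ne (by positivity) fun h0 => h ?_
  rw [sq, sq, eq_comm, mul_self_add_mul_self_eq_zero] at h0
  rw [h0.1, h0.2]

lemma Real.sqrt_sq_mul {l : ℝ} (hl : 0 ≤ l) (q : ℝ) : √(l ^ 2 * q) = l * √q := by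
  rw [Real.sqrt_mul (sq_nonneg l), Real.sqrt_sq hl]

/-- `V(x₁,x₂) = (x₂ − x₁ + √((x₂−x₁)² + 2(x₁²+x₂²)))/2` is positive away
from the origin, vanishes at the origin, and is positively homogeneous of degree 1. -/
theorem example_V_positive_definite_homogeneous
    (V : ℝ → ℝ → ℝ)
    (hV : ∀ x₁ x₂, V x₁ x₂ =
      (x₂ - x₁ + Real.sqrt ((x₂ - x₁) ^ 2 + 2 * (x₁ ^ 2 + x₂ ^ 2))) / 2) :
    (∀ x₁ x₂ : ℝ, (x₁, x₂) ≠ (0, 0) → 0 < V x₁ x₂) ∧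
    V 0 0 = 0 ∧
    (∀ (l : ℝ), 0 < l → ∀ x₁ x₂, V (l * x₁) (l * x₂) = l * V x₁ x₂) := by
  refine ⟨fun x₁ x₂ hne => ?_, by simp [hV], fun l hl x₁ x₂ => ?_⟩
  · have hnorm := sq_add_sq_pos_of_ne_zero hne
    have hroot : x₁ - x₂ < √((x₂ - x₁) ^ 2 + 2 * (x₁ ^ 2 + x₂ ^ 2)) :=
      Real.lt_sqrt_of_sq_lt (by nlinarith)
    rw [hV]
    linarith
  · have hradicand : (l * x₂ - l * x₁) ^ 2 + 2 * ((l * x₁) ^ 2 + (l * x₂) ^ 2)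
        = l ^ 2 * ((x₂ - x₁) ^ 2 + 2 * (x₁ ^ 2 + x₂ ^ 2)) := by ring
    rw [hV, hV, hradicand, Real.sqrt_sq_mul hl.le]
    ring
end
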